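/- Let (X, φ) be an algebraic convex geometry and C a maximal chain in the lattice of closed sets. Let C* = {D ∈ C : D has a lower cover in C}. Then the map h_C(x) = ⋂{C' ∈ C : x ∈ C'} is a bijection from X onto C*; moreover for each x, h_C(x) = h_C(x)_* ∪ {x} where h_C(x)_* is the lower cover of h_C(x) in C. -/

import Mathlib

/-- φ is a closure operator: extensive, monotone, idempotent. -/
def IsClosureOp {X : Type*} (φ : Set X → Set X) : Prop :=
  (∀ A, A ⊆ φ A) ∧ (∀ A B, A ⊆ B → φ A ⊆ φ B) ∧ (∀ A, φ (φ A) = φ A)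

/-- φ is algebraic (finitary): the closure of a set is the union of closures of its
finite subsets. -/
def IsAlgebraicOp {X : Type*} (φ : Set X → Set X) : Prop :=
  ∀ A, φ A = ⋃₀ {T | ∃ B, B ⊆ A ∧ B.Finite ∧ T = φ B}

/-- The anti-exchange property. -/
def AntiExchange {X : Type*} (φ : Set X → Set X) : Prop :=
  ∀ (x y : X) (A : Set X), x ≠ y → φ A = A → x ∉ A →
    x ∈ φ (A ∪ {y}) → y ∉ φ (A ∪ {x})

/-- A convex geometry: a zero-closure operator with the anti-exchange property. -/
def IsConvexGeometry {X : Type*} (φ : Set X → Set X) : Prop :=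
  IsClosureOp φ ∧ φ ∅ = ∅ ∧ AntiExchange φ

/-- An algebraic convex geometry. -/
def IsAlgConvexGeometry {X : Type*} (φ : Set X → Set X) : Prop :=
  IsClosureOp φ ∧ IsAlgebraicOp φ ∧ φ ∅ = ∅ ∧ AntiExchange φ

/-- An algebraic subset of Pow X : closed under arbitrary intersections
(with ⋂₀ ∅ = X) and under unions of nonempty up-directed subfamilies. -/
def IsAlgSubset {X : Type*} (F : Set (Set X)) : Prop :=
  (∀ S ⊆ F, ⋂₀ S ∈ F) ∧
  (∀ S ⊆ F, S.Nonempty → (∀ A ∈ S, ∀ B ∈ S, ∃ C ∈ S, A ∪ B ⊆ C) → ⋃₀ S ∈ F)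

/-- A maximal chain in the lattice of φ-closed sets. -/
def IsMaxChainOfClosed {X : Type*} (φ : Set X → Set X) (C : Set (Set X)) : Prop :=
  C ⊆ {Y | φ Y = Y} ∧ IsChain (· ⊆ ·) C ∧
  ∀ T, φ T = T → (∀ A ∈ C, T ⊆ A ∨ A ⊆ T) → T ∈ C

/-- D_* is a lower cover of D within the chain C. -/
def LowerCoverIn {X : Type*} (C : Set (Set X)) (Dst D : Set X) : Prop :=
  Dst ∈ C ∧ D ∈ C ∧ Dst ⊂ D ∧ ∀ E ∈ C, ¬ (Dst ⊂ E ∧ E ⊂ D)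

/-!
Let `H` be the intersection of the members of `C` containing `x` and `D` the union of those
not containing `x`. Because the closed sets are closed under intersections and (the operator being
algebraic) under directed unions, maximality puts `H` and `D` in `C`, and every member of `C` lies
below `D` or above `H`; so `D` is the lower cover of `H`, and every closed set between them is in
`C`. For `z ∈ H \ D` the closed set `φ (D ∪ {z})` is such a set and is not below `D`, hence
contains `H`. Two distinct points `x, y ∈ H \ D` would thus lie in each other's closure over `D`,
contradicting anti-exchange; hence `H = D ∪ {x}`. Bijectivity onto the covering elements follows.
-/

section ConvexGeometry

variable {X : Type*} {φ : Set X → Set X} {C : Set (Set X)}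

namespace IsClosureOp

theorem closure_minimal (hφ : IsClosureOp φ) {A B : Set X} (hAB : A ⊆ B) (hB : φ B = B) :
    φ A ⊆ B :=
  hB ▸ hφ.2.1 A B hAB

theorem sInter_closed (hφ : IsClosureOp φ) {S : Set (Set X)} (hS : ∀ T ∈ S, φ T = T) :
    φ (⋂₀ S) = ⋂₀ S :=
  (Set.subset_sInter fun T hT =>
    hφ.closure_minimal (Set.sInter_subset_of_mem hT) (hS T hT)).antisymm (hφ.1 _)

theorem sUnion_closed_of_directedOn (hφ : IsClosureOp φ) (halg : IsAlgebraicOp φ)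
    {S : Set (Set X)} (hne : S.Nonempty) (hdir : DirectedOn (· ⊆ ·) S)
    (hS : ∀ T ∈ S, φ T = T) : φ (⋃₀ S) = ⋃₀ S := by
  refine Set.Subset.antisymm ?_ (hφ.1 _)
  rw [halg]
  rintro t ⟨_, ⟨B, hBS, hB, rfl⟩, htB⟩
  obtain ⟨T, hT, hBT⟩ := hdir.exists_mem_subset_of_finite_of_subset_sUnion hne hB hBS
  exact ⟨T, hT, hφ.closure_minimal hBT (hS T hT) htB⟩

end IsClosureOp

namespace IsMaxChainOfClosed

theorem sInter_mem (hC : IsMaxChainOfClosed φ C) (hφ : IsClosureOp φ) {S : Set (Set X)}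
    (hS : S ⊆ C) : ⋂₀ S ∈ C := by
  refine hC.2.2 _ (hφ.sInter_closed fun T hT => hC.1 (hS hT)) fun A hA => ?_
  by_cases hAS : ∀ T ∈ S, A ⊆ T
  · exact Or.inr (Set.subset_sInter hAS)
  · push Not at hAS
    obtain ⟨T, hT, hAT⟩ := hAS
    exact Or.inl <|
      (Set.sInter_subset_of_mem hT).trans ((hC.2.1.total (hS hT) hA).resolve_right hAT)

theorem sUnion_mem (hC : IsMaxChainOfClosed φ C) (hφ : IsClosureOp φ) (halg : IsAlgebraicOp φ)
    {S : Set (Set X)} (hS : S ⊆ C) (hne : S.Nonempty) : ⋃₀ S ∈ C := by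
  have hclosed := hφ.sUnion_closed_of_directedOn halg hne (hC.2.1.mono hS).directedOn
    fun T hT => hC.1 (hS hT)
  refine hC.2.2 _ hclosed fun A hA => ?_
  by_cases hSA : ∀ T ∈ S, T ⊆ A
  · exact Or.inl (Set.sUnion_subset hSA)
  · push Not at hSA
    obtain ⟨T, hT, hTA⟩ := hSA
    exact Or.inr <|
      ((hC.2.1.total (hS hT) hA).resolve_left hTA).trans (Set.subset_sUnion_of_mem hT)

theorem empty_mem (hC : IsMaxChainOfClosed φ C) (hφ : φ ∅ = ∅) : ∅ ∈ C :=
  hC.2.2 ∅ hφ fun A _ => Or.inl (Set.empty_subset A)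

theorem mem_of_subset_of_subset (hC : IsMaxChainOfClosed φ C) {D H M : Set X}
    (hsplit : ∀ A ∈ C, A ⊆ D ∨ H ⊆ A) (hM : φ M = M) (hDM : D ⊆ M) (hMH : M ⊆ H) :
    M ∈ C :=
  hC.2.2 M hM fun A hA =>
    (hsplit A hA).elim (fun h => Or.inr (h.trans hDM)) fun h => Or.inl (hMH.trans h)

end IsMaxChainOfClosed

/-- `chainHull C x` is the paper's `h_C(x)`; `chainBelow C x` turns out to be its lower cover
`h_C(x)_*`. -/
def chainHull (C : Set (Set X)) (x : X) : Set X := ⋂₀ {C' | C' ∈ C ∧ x ∈ C'}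

def chainBelow (C : Set (Set X)) (x : X) : Set X := ⋃₀ {C' | C' ∈ C ∧ x ∉ C'}

variable {x : X}

theorem mem_chainHull : x ∈ chainHull C x := fun _ hT => hT.2

theorem chainHull_subset {A : Set X} (hA : A ∈ C) (hxA : x ∈ A) : chainHull C x ⊆ A :=
  Set.sInter_subset_of_mem ⟨hA, hxA⟩

theorem notMem_chainBelow : x ∉ chainBelow C x := fun ⟨_, hT, hxT⟩ => hT.2 hxT

theorem subset_chainBelow_or_chainHull_subset {A : Set X} (hA : A ∈ C) :
    A ⊆ chainBelow C x ∨ chainHull C x ⊆ A := by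
  by_cases hxA : x ∈ A
  · exact Or.inr (chainHull_subset hA hxA)
  · exact Or.inl (Set.subset_sUnion_of_mem ⟨hA, hxA⟩)

theorem chainBelow_ssubset_chainHull (hch : IsChain (· ⊆ ·) C) :
    chainBelow C x ⊂ chainHull C x := by
  refine ⟨Set.sUnion_subset fun A ⟨hA, hxA⟩ => Set.subset_sInter fun T ⟨hT, hxT⟩ => ?_,
    fun h => notMem_chainBelow (h mem_chainHull)⟩
  exact (hch.total hA hT).resolve_right fun hTA => hxA (hTA hxT)

theorem chainHull_mem (hC : IsMaxChainOfClosed φ C) (hφ : IsClosureOp φ) :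
    chainHull C x ∈ C :=
  hC.sInter_mem hφ fun _ hT => hT.1

theorem chainBelow_mem (hC : IsMaxChainOfClosed φ C) (hφ : IsClosureOp φ)
    (halg : IsAlgebraicOp φ) (hemp : φ ∅ = ∅) : chainBelow C x ∈ C :=
  hC.sUnion_mem hφ halg (fun _ hT => hT.1) ⟨∅, hC.empty_mem hemp, id⟩

theorem lowerCoverIn_chainBelow_chainHull (hC : IsMaxChainOfClosed φ C)
    (hφ : IsClosureOp φ) (halg : IsAlgebraicOp φ) (hemp : φ ∅ = ∅) :
    LowerCoverIn C (chainBelow C x) (chainHull C x) := by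
  refine ⟨chainBelow_mem hC hφ halg hemp, chainHull_mem hC hφ,
    chainBelow_ssubset_chainHull hC.2.1, fun E hE ⟨hDE, hEH⟩ => ?_⟩
  rcases subset_chainBelow_or_chainHull_subset hE with h | h
  · exact hDE.2 h
  · exact hEH.2 h

theorem chainHull_subset_closure_insert (hC : IsMaxChainOfClosed φ C) (hφ : IsClosureOp φ)
    {z : X} (hzH : z ∈ chainHull C x) (hzD : z ∉ chainBelow C x) :
    chainHull C x ⊆ φ (chainBelow C x ∪ {z}) := by
  have hsub : chainBelow C x ∪ {z} ⊆ chainHull C x :=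
    Set.union_subset (chainBelow_ssubset_chainHull hC.2.1).1 (Set.singleton_subset_iff.2 hzH)
  have hmem : φ (chainBelow C x ∪ {z}) ∈ C :=
    hC.mem_of_subset_of_subset (fun A hA => subset_chainBelow_or_chainHull_subset hA)
      (hφ.2.2 _) (Set.subset_union_left.trans (hφ.1 _))
      (hφ.closure_minimal hsub (hC.1 (chainHull_mem hC hφ)))
  refine (subset_chainBelow_or_chainHull_subset hmem).resolve_left fun h => hzD (h ?_)
  exact hφ.1 _ (Set.mem_union_right _ rfl)

theorem eq_of_mem_chainHull_of_notMem_chainBelow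
    (hC : IsMaxChainOfClosed φ C) (hφ : IsAlgConvexGeometry φ) {y : X}
    (hyH : y ∈ chainHull C x) (hyD : y ∉ chainBelow C x) : y = x := by
  obtain ⟨hcl, halg, hemp, hae⟩ := hφ
  by_contra hyx
  have hDcl : φ (chainBelow C x) = chainBelow C x := hC.1 (chainBelow_mem hC hcl halg hemp)
  exact hae y x _ hyx hDcl hyD
    (chainHull_subset_closure_insert hC hcl mem_chainHull notMem_chainBelow hyH)
    (chainHull_subset_closure_insert hC hcl hyH hyD mem_chainHull)

theorem chainHull_eq_chainBelow_union (hC : IsMaxChainOfClosed φ C)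
    (hφ : IsAlgConvexGeometry φ) : chainHull C x = chainBelow C x ∪ {x} := by
  refine Set.Subset.antisymm (fun y hyH => ?_) (Set.union_subset
    (chainBelow_ssubset_chainHull hC.2.1).1 (Set.singleton_subset_iff.2 mem_chainHull))
  by_cases hyD : y ∈ chainBelow C x
  · exact Or.inl hyD
  · exact Or.inr (eq_of_mem_chainHull_of_notMem_chainBelow hC hφ hyH hyD)

theorem chainHull_injective (hC : IsMaxChainOfClosed φ C)
    (hφ : IsAlgConvexGeometry φ) : Function.Injective (chainHull C) := by
  intro x y hxy
  refine eq_of_mem_chainHull_of_notMem_chainBelow hC hφ (hxy ▸ mem_chainHull) ?_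
  rintro ⟨A, ⟨hA, hyA⟩, hxA⟩
  exact hyA (chainHull_subset hA hxA (hxy ▸ mem_chainHull))

theorem exists_chainHull_eq (hC : IsMaxChainOfClosed φ C)
    (hφ : IsClosureOp φ) {D Dst : Set X} (hcov : LowerCoverIn C Dst D) :
    ∃ x, chainHull C x = D := by
  obtain ⟨hDst, hD, hlt, hnot⟩ := hcov
  obtain ⟨x, hxD, hxDst⟩ := Set.exists_of_ssubset hlt
  refine ⟨x, ?_⟩
  have hHD : chainHull C x ⊆ D := chainHull_subset hD hxD
  have hDstH : Dst ⊂ chainHull C x :=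
    ⟨(hC.2.1.total hDst (chainHull_mem hC hφ)).resolve_right fun h => hxDst (h mem_chainHull),
      fun h => hxDst (h mem_chainHull)⟩
  by_contra hne
  exact hnot _ (chainHull_mem hC hφ) ⟨hDstH, hHD.ssubset_of_ne hne⟩

end ConvexGeometry

/-- For a maximal chain C of an algebraic convex geometry, h_C is a bijection from X
onto the set C* of elements of C having a lower cover in C, and
h_C(x) = (h_C(x))_* ∪ {x}. -/
theorem stmt11 {X : Type*} (φ : Set X → Set X)
    (hacg : IsAlgConvexGeometry φ) (C : Set (Set X))
    (hC : IsMaxChainOfClosed φ C) :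
    (∀ x : X, ∃ Dst, LowerCoverIn C Dst (⋂₀ {C' | C' ∈ C ∧ x ∈ C'}) ∧
        (⋂₀ {C' | C' ∈ C ∧ x ∈ C'}) = Dst ∪ {x}) ∧
      Function.Injective (fun x : X => ⋂₀ {C' | C' ∈ C ∧ x ∈ C'}) ∧
      (∀ D ∈ C, (∃ Dst, LowerCoverIn C Dst D) →
        ∃ x : X, (⋂₀ {C' | C' ∈ C ∧ x ∈ C'}) = D) := by
  have ⟨hcl, halg, hemp, _⟩ := hacg
  refine ⟨fun x => ⟨chainBelow C x, lowerCoverIn_chainBelow_chainHull hC hcl halg hemp,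
    chainHull_eq_chainBelow_union hC hacg⟩, chainHull_injective hC hacg, ?_⟩
  rintro D - ⟨Dst, hcov⟩
  exact exists_chainHull_eq hC hcl hcov
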